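/- Let G be Q_m or D_m with m even, with α₂ = Σ_{g∈⟨a⟩} x_{g^{-1}} g − Σ_{g∈G\⟨a⟩} x_g g, α₃ = Σ_{g∈G} χ₃(g) x_g g, α₄ = Σ_{g∈⟨a⟩} χ₄(g) x_{g^{-1}} g + Σ_{g∈G\⟨a⟩} χ₄(g) x_g g. Then [α₂, α₃ + α₄] = 0 and [α₃, α₁ + α₂] = 0 and [α₄, α₁ + α₂] = 0 in C[G], where α₁ = Σ_{g∈G} x_g g. -/

import Mathlib

/-!
Both `α₁ + α₂` and `α₃ + α₄` (where `χ₄(b) = -χ₃(b)`) cancel off `⟨a⟩` and take the form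
`Σ_k f(k) aᵏ` with `f(-k) = f(k)`; for `α₃ + α₄` this needs `(-1)ᵏ` to be even in `k`, i.e. `⟨a⟩`
of even order (`m` for `D_m`, `2m` for `Q_m`). Since `b aᵏ b⁻¹ = a⁻ᵏ`, such an element is central
in `ℂ[G]`, so each of the commutators has a central entry and vanishes.
-/

/-- `α₁ = Σ_{g∈G} x_g g` for `D_m`. -/
noncomputable def dihedralAlpha1 (m : ℕ) [NeZero m] (x : DihedralGroup m → ℂ) :
    MonoidAlgebra ℂ (DihedralGroup m) :=
  ∑ g : DihedralGroup m, MonoidAlgebra.single g (x g)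

/-- `α₂ = Σ_{g∈⟨a⟩} x_{g⁻¹} g − Σ_{g∈G∖⟨a⟩} x_g g` for `D_m`. -/
noncomputable def dihedralAlpha2 (m : ℕ) [NeZero m] (x : DihedralGroup m → ℂ) :
    MonoidAlgebra ℂ (DihedralGroup m) :=
  (∑ k : ZMod m, MonoidAlgebra.single (DihedralGroup.r k) (x ((DihedralGroup.r k)⁻¹))) -
  ∑ k : ZMod m, MonoidAlgebra.single (DihedralGroup.sr k) (x (DihedralGroup.sr k))

/-- `α₃ = Σ_g χ₃(g) x_g g` for `D_m`, where `χ₃(a^k) = (−1)^k`, `χ₃(a^k b) = (−1)^k c₃`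
with `c₃ = χ₃(b)`. -/
noncomputable def dihedralAlpha3 (m : ℕ) [NeZero m] (c₃ : ℂ) (x : DihedralGroup m → ℂ) :
    MonoidAlgebra ℂ (DihedralGroup m) :=
  (∑ k : ZMod m, MonoidAlgebra.single (DihedralGroup.r k)
      ((-1 : ℂ) ^ k.val * x (DihedralGroup.r k))) +
  ∑ k : ZMod m, MonoidAlgebra.single (DihedralGroup.r k * DihedralGroup.sr 0)
      ((-1 : ℂ) ^ k.val * c₃ * x (DihedralGroup.r k * DihedralGroup.sr 0))

/-- `α₄ = Σ_{g∈⟨a⟩} χ₄(g) x_{g⁻¹} g + Σ_{g∉⟨a⟩} χ₄(g) x_g g` for `D_m`, where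
`χ₄(a^k) = (−1)^k`, `χ₄(a^k b) = (−1)^k c₄` with `c₄ = χ₄(b)`. -/
noncomputable def dihedralAlpha4 (m : ℕ) [NeZero m] (c₄ : ℂ) (x : DihedralGroup m → ℂ) :
    MonoidAlgebra ℂ (DihedralGroup m) :=
  (∑ k : ZMod m, MonoidAlgebra.single (DihedralGroup.r k)
      ((-1 : ℂ) ^ k.val * x ((DihedralGroup.r k)⁻¹))) +
  ∑ k : ZMod m, MonoidAlgebra.single (DihedralGroup.r k * DihedralGroup.sr 0)
      ((-1 : ℂ) ^ k.val * c₄ * x (DihedralGroup.r k * DihedralGroup.sr 0))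

/-- `α₁ = Σ_{g∈G} x_g g` for `Q_m`. -/
noncomputable def quaternionAlpha1 (m : ℕ) [NeZero m] (x : QuaternionGroup m → ℂ) :
    MonoidAlgebra ℂ (QuaternionGroup m) :=
  ∑ g : QuaternionGroup m, MonoidAlgebra.single g (x g)

/-- `α₂ = Σ_{g∈⟨a⟩} x_{g⁻¹} g − Σ_{g∈G∖⟨a⟩} x_g g` for `Q_m`. -/
noncomputable def quaternionAlpha2 (m : ℕ) [NeZero m] (x : QuaternionGroup m → ℂ) :
    MonoidAlgebra ℂ (QuaternionGroup m) :=
  (∑ k : ZMod (2 * m),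
      MonoidAlgebra.single (QuaternionGroup.a k) (x ((QuaternionGroup.a k)⁻¹))) -
  ∑ k : ZMod (2 * m), MonoidAlgebra.single (QuaternionGroup.xa k) (x (QuaternionGroup.xa k))

/-- `α₃ = Σ_g χ₃(g) x_g g` for `Q_m`, where `χ₃(a^k) = (−1)^k`, `χ₃(a^k b) = (−1)^k c₃`. -/
noncomputable def quaternionAlpha3 (m : ℕ) [NeZero m] (c₃ : ℂ) (x : QuaternionGroup m → ℂ) :
    MonoidAlgebra ℂ (QuaternionGroup m) :=
  (∑ k : ZMod (2 * m), MonoidAlgebra.single (QuaternionGroup.a k)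
      ((-1 : ℂ) ^ k.val * x (QuaternionGroup.a k))) +
  ∑ k : ZMod (2 * m), MonoidAlgebra.single (QuaternionGroup.a k * QuaternionGroup.xa 0)
      ((-1 : ℂ) ^ k.val * c₃ * x (QuaternionGroup.a k * QuaternionGroup.xa 0))

/-- `α₄ = Σ_{g∈⟨a⟩} χ₄(g) x_{g⁻¹} g + Σ_{g∉⟨a⟩} χ₄(g) x_g g` for `Q_m`, where
`χ₄(a^k) = (−1)^k`, `χ₄(a^k b) = (−1)^k c₄`. -/
noncomputable def quaternionAlpha4 (m : ℕ) [NeZero m] (c₄ : ℂ) (x : QuaternionGroup m → ℂ) :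
    MonoidAlgebra ℂ (QuaternionGroup m) :=
  (∑ k : ZMod (2 * m), MonoidAlgebra.single (QuaternionGroup.a k)
      ((-1 : ℂ) ^ k.val * x ((QuaternionGroup.a k)⁻¹))) +
  ∑ k : ZMod (2 * m), MonoidAlgebra.single (QuaternionGroup.a k * QuaternionGroup.xa 0)
      ((-1 : ℂ) ^ k.val * c₄ * x (QuaternionGroup.a k * QuaternionGroup.xa 0))

open MonoidAlgebra

theorem MonoidAlgebra.commute_of_forall_commute_of {k G : Type*} [CommSemiring k] [Monoid G]
    {z : MonoidAlgebra k G} (h : ∀ g, Commute z (of k G g)) (w : MonoidAlgebra k G) :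
    Commute z w := by
  induction w using MonoidAlgebra.induction_on with
  | of g => exact h g
  | add u v hu hv => exact hu.add_right hv
  | smul r u hu => exact hu.smul_right r

theorem ZMod.neg_one_pow_val_neg {R : Type*} [Ring R] {n : ℕ} [NeZero n]
    (hn : Even n) (j : ZMod n) : (-1 : R) ^ (-j).val = (-1) ^ j.val := by
  rw [neg_one_pow_eq_pow_mod_two (-j).val, neg_one_pow_eq_pow_mod_two j.val, ZMod.neg_val]
  obtain ⟨r, rfl⟩ := hn
  have := j.val_lt
  split_ifs with hj
  · simp [hj]
  · congr 1
    omega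

namespace DihedralGroup

variable {n : ℕ}

theorem sum_eq_sum_r_add_sum_sr [NeZero n] {M : Type*} [AddCommMonoid M]
    (F : DihedralGroup n → M) : ∑ g, F g = ∑ j, F (r j) + ∑ j, F (sr j) := by
  rw [← equivSum.symm.sum_comp, Fintype.sum_sum_type]
  rfl

theorem commute_sum_single_r [NeZero n] {k : Type*} [CommSemiring k] {f : ZMod n → k}
    (hf : ∀ j, f (-j) = f j) (w : MonoidAlgebra k (DihedralGroup n)) :
    Commute (∑ j, single (r j) (f j)) w := by
  refine commute_of_forall_commute_of (fun g => ?_) w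
  simp only [Commute, SemiconjBy, of_apply, Finset.sum_mul, Finset.mul_sum, single_mul_single,
    mul_one, one_mul]
  cases g with
  | r i => simp only [r_mul_r, add_comm]
  | sr i =>
    simp only [r_mul_sr, sr_mul_r]
    exact Fintype.sum_equiv (Equiv.neg _) _ _ fun j => by simp [hf, sub_eq_add_neg]

end DihedralGroup

namespace QuaternionGroup

variable {n : ℕ}

theorem inv_a (i : ZMod (2 * n)) : (a i)⁻¹ = a (-i) :=
  rfl

def equivSum : QuaternionGroup n ≃ ZMod (2 * n) ⊕ ZMod (2 * n) where
  toFun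
    | a j => .inl j
    | xa j => .inr j
  invFun
    | .inl j => a j
    | .inr j => xa j
  left_inv := by rintro (j | j) <;> rfl
  right_inv := by rintro (j | j) <;> rfl

theorem sum_eq_sum_a_add_sum_xa [NeZero n] {M : Type*} [AddCommMonoid M]
    (F : QuaternionGroup n → M) : ∑ g, F g = ∑ j, F (a j) + ∑ j, F (xa j) := by
  rw [← equivSum.symm.sum_comp, Fintype.sum_sum_type]
  rfl

theorem commute_sum_single_a [NeZero n] {k : Type*} [CommSemiring k] {f : ZMod (2 * n) → k}
    (hf : ∀ j, f (-j) = f j) (w : MonoidAlgebra k (QuaternionGroup n)) :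
    Commute (∑ j, single (a j) (f j)) w := by
  refine commute_of_forall_commute_of (fun g => ?_) w
  simp only [Commute, SemiconjBy, of_apply, Finset.sum_mul, Finset.mul_sum, single_mul_single,
    mul_one, one_mul]
  cases g with
  | a i => simp only [a_mul_a, add_comm]
  | xa i =>
    simp only [a_mul_xa, xa_mul_a]
    exact Fintype.sum_equiv (Equiv.neg _) _ _ fun j => by simp [hf, sub_eq_add_neg]

end QuaternionGroup

section Decomposition

open DihedralGroup QuaternionGroup

variable {m : ℕ} [NeZero m]

theorem dihedralAlpha1_add_dihedralAlpha2 (x : DihedralGroup m → ℂ) :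
    dihedralAlpha1 m x + dihedralAlpha2 m x =
      ∑ k, single (r k) (x (r k) + x (r (-k))) := by
  rw [dihedralAlpha1, dihedralAlpha2, sum_eq_sum_r_add_sum_sr]
  simp only [inv_r, single_add, Finset.sum_add_distrib]
  abel

theorem dihedralAlpha3_add_dihedralAlpha4_neg (c : ℂ) (x : DihedralGroup m → ℂ) :
    dihedralAlpha3 m c x + dihedralAlpha4 m (-c) x =
      ∑ k, single (r k) ((-1) ^ k.val * (x (r k) + x (r (-k)))) := by
  rw [dihedralAlpha3, dihedralAlpha4]
  simp only [inv_r, mul_add, mul_neg, neg_mul, single_add, single_neg, Finset.sum_add_distrib,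
    Finset.sum_neg_distrib]
  abel

theorem quaternionAlpha1_add_quaternionAlpha2 (y : QuaternionGroup m → ℂ) :
    quaternionAlpha1 m y + quaternionAlpha2 m y =
      ∑ k, single (a k) (y (a k) + y (a (-k))) := by
  rw [quaternionAlpha1, quaternionAlpha2, sum_eq_sum_a_add_sum_xa]
  simp only [inv_a, single_add, Finset.sum_add_distrib]
  abel

theorem quaternionAlpha3_add_quaternionAlpha4_neg (c : ℂ) (y : QuaternionGroup m → ℂ) :
    quaternionAlpha3 m c y + quaternionAlpha4 m (-c) y =
      ∑ k, single (a k) ((-1) ^ k.val * (y (a k) + y (a (-k)))) := by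
  rw [quaternionAlpha3, quaternionAlpha4]
  simp only [inv_a, mul_add, mul_neg, neg_mul, single_add, single_neg, Finset.sum_add_distrib,
    Finset.sum_neg_distrib]
  abel

end Decomposition

section Centrality

open DihedralGroup QuaternionGroup

variable {m : ℕ} [NeZero m]

theorem commute_dihedralAlpha1_add_dihedralAlpha2 (x : DihedralGroup m → ℂ)
    (w : MonoidAlgebra ℂ (DihedralGroup m)) :
    Commute (dihedralAlpha1 m x + dihedralAlpha2 m x) w := by
  rw [dihedralAlpha1_add_dihedralAlpha2]
  exact commute_sum_single_r (fun k => by rw [neg_neg, add_comm]) w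

theorem commute_dihedralAlpha3_add_dihedralAlpha4_neg (hm : Even m) (c : ℂ)
    (x : DihedralGroup m → ℂ) (w : MonoidAlgebra ℂ (DihedralGroup m)) :
    Commute (dihedralAlpha3 m c x + dihedralAlpha4 m (-c) x) w := by
  rw [dihedralAlpha3_add_dihedralAlpha4_neg]
  exact commute_sum_single_r
    (fun k => by rw [ZMod.neg_one_pow_val_neg hm, neg_neg, add_comm (x (r (-k)))]) w

theorem commute_quaternionAlpha1_add_quaternionAlpha2 (y : QuaternionGroup m → ℂ)
    (w : MonoidAlgebra ℂ (QuaternionGroup m)) :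
    Commute (quaternionAlpha1 m y + quaternionAlpha2 m y) w := by
  rw [quaternionAlpha1_add_quaternionAlpha2]
  exact commute_sum_single_a (fun k => by rw [neg_neg, add_comm]) w

theorem commute_quaternionAlpha3_add_quaternionAlpha4_neg (c : ℂ)
    (y : QuaternionGroup m → ℂ) (w : MonoidAlgebra ℂ (QuaternionGroup m)) :
    Commute (quaternionAlpha3 m c y + quaternionAlpha4 m (-c) y) w := by
  rw [quaternionAlpha3_add_quaternionAlpha4_neg]
  exact commute_sum_single_a
    (fun k => by rw [ZMod.neg_one_pow_val_neg (even_two_mul m), neg_neg,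
      add_comm (y (a (-k)))]) w

end Centrality

/-- For `G = Q_m` (or `D_m` with `m` even): `[α₂, α₃ + α₄] = 0`, `[α₃, α₁ + α₂] = 0` and
`[α₄, α₁ + α₂] = 0` in `ℂ[G]`. -/
theorem commutator_identities_alpha (m : ℕ) [NeZero m]
    (x : DihedralGroup m → ℂ) (y : QuaternionGroup m → ℂ) :
    (Even m →
      (dihedralAlpha2 m x * (dihedralAlpha3 m 1 x + dihedralAlpha4 m (-1) x) -
        (dihedralAlpha3 m 1 x + dihedralAlpha4 m (-1) x) * dihedralAlpha2 m x = 0) ∧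
      (dihedralAlpha3 m 1 x * (dihedralAlpha1 m x + dihedralAlpha2 m x) -
        (dihedralAlpha1 m x + dihedralAlpha2 m x) * dihedralAlpha3 m 1 x = 0) ∧
      (dihedralAlpha4 m (-1) x * (dihedralAlpha1 m x + dihedralAlpha2 m x) -
        (dihedralAlpha1 m x + dihedralAlpha2 m x) * dihedralAlpha4 m (-1) x = 0)) ∧
    (Odd m →
      (quaternionAlpha2 m y *
          (quaternionAlpha3 m Complex.I y + quaternionAlpha4 m (-Complex.I) y) -
        (quaternionAlpha3 m Complex.I y + quaternionAlpha4 m (-Complex.I) y) *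
          quaternionAlpha2 m y = 0) ∧
      (quaternionAlpha3 m Complex.I y * (quaternionAlpha1 m y + quaternionAlpha2 m y) -
        (quaternionAlpha1 m y + quaternionAlpha2 m y) * quaternionAlpha3 m Complex.I y = 0) ∧
      (quaternionAlpha4 m (-Complex.I) y * (quaternionAlpha1 m y + quaternionAlpha2 m y) -
        (quaternionAlpha1 m y + quaternionAlpha2 m y) *
          quaternionAlpha4 m (-Complex.I) y = 0)) ∧
    (Even m →
      (quaternionAlpha2 m y * (quaternionAlpha3 m 1 y + quaternionAlpha4 m (-1) y) -
        (quaternionAlpha3 m 1 y + quaternionAlpha4 m (-1) y) * quaternionAlpha2 m y = 0) ∧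
      (quaternionAlpha3 m 1 y * (quaternionAlpha1 m y + quaternionAlpha2 m y) -
        (quaternionAlpha1 m y + quaternionAlpha2 m y) * quaternionAlpha3 m 1 y = 0) ∧
      (quaternionAlpha4 m (-1) y * (quaternionAlpha1 m y + quaternionAlpha2 m y) -
        (quaternionAlpha1 m y + quaternionAlpha2 m y) * quaternionAlpha4 m (-1) y = 0)) := by
  refine ⟨fun hm => ⟨?_, ?_, ?_⟩, fun _ => ⟨?_, ?_, ?_⟩, fun _ => ⟨?_, ?_, ?_⟩⟩ <;>
    rw [sub_eq_zero]
  · exact (commute_dihedralAlpha3_add_dihedralAlpha4_neg hm 1 x _).eq.symm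
  · exact (commute_dihedralAlpha1_add_dihedralAlpha2 x _).eq.symm
  · exact (commute_dihedralAlpha1_add_dihedralAlpha2 x _).eq.symm
  · exact (commute_quaternionAlpha3_add_quaternionAlpha4_neg Complex.I y _).eq.symm
  · exact (commute_quaternionAlpha1_add_quaternionAlpha2 y _).eq.symm
  · exact (commute_quaternionAlpha1_add_quaternionAlpha2 y _).eq.symm
  · exact (commute_quaternionAlpha3_add_quaternionAlpha4_neg 1 y _).eq.symm
  · exact (commute_quaternionAlpha1_add_quaternionAlpha2 y _).eq.symm
  · exact (commute_quaternionAlpha1_add_quaternionAlpha2 y _).eq.symm
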